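/- arXiv:1706.03808 — 2 statements merged into one kernel-verified Lean document; each statement's English description precedes it below -/
import Mathlib

section
/- Let A be a 2-connected non-trivial signed Eulerian graph without negative loops, and let v be a vertex of A. Then either A is a circuit, or the edge set of A can be partitioned into two nontrivial Eulerian subgraphs A1 and A2 such that A1 contains v and A2 has an even number of negative edges. -/
open Finset
open scoped Classical

noncomputable section

namespace SignedCircuitCover

variable {V E : Type} [Fintype V] [Fintype E] [DecidableEq V] [DecidableEq E]

/-- `e` is a loop. -/
def IsLoop (ends : E → Sym2 V) (e : E) : Prop := (ends e).IsDiag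

/-- The vertices incident with an edge of `F`. -/
def support (ends : E → Sym2 V) (F : Finset E) : Finset V :=
  Finset.univ.filter fun v => ∃ e ∈ F, v ∈ ends e

/-- Degree of `v` in the subgraph with edge set `F` (a loop counts twice). -/
def degree (ends : E → Sym2 V) (F : Finset E) (v : V) : ℕ :=
  ∑ e ∈ F, (if ends e = Sym2.diag v then 2 else if v ∈ ends e then 1 else 0)

/-- Reachability inside the edge set `F`. -/
def Reach (ends : E → Sym2 V) (F : Finset E) : V → V → Prop :=
  Relation.ReflTransGen fun a b => ∃ e ∈ F, ends e = s(a, b)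

/-- The subgraph with edge set `F` is connected. -/
def ConnectedOn (ends : E → Sym2 V) (F : Finset E) : Prop :=
  ∀ u ∈ support ends F, ∀ v ∈ support ends F, Reach ends F u v

/-- The whole graph is connected. -/
def Connected (ends : E → Sym2 V) : Prop :=
  ∀ u v : V, Reach ends (Finset.univ : Finset E) u v

/-- `F` is the edge set of a circuit (connected, 2-regular; a loop is a circuit). -/
def IsCircuit (ends : E → Sym2 V) (F : Finset E) : Prop :=
  F.Nonempty ∧ ConnectedOn ends F ∧ ∀ v ∈ support ends F, degree ends F v = 2

/-- `F` is the edge set of an Eulerian subgraph (connected, all degrees even). -/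
def IsEulerianOn (ends : E → Sym2 V) (F : Finset E) : Prop :=
  ConnectedOn ends F ∧ ∀ v ∈ support ends F, Even (degree ends F v)

/-- Negative edges of `F` (`sgn e = true` means `e` is negative). -/
def negEdges (sgn : E → Bool) (F : Finset E) : Finset E := F.filter fun e => sgn e = true

def IsBalancedCircuit (ends : E → Sym2 V) (sgn : E → Bool) (F : Finset E) : Prop :=
  IsCircuit ends F ∧ Even (negEdges sgn F).card

def IsUnbalancedCircuit (ends : E → Sym2 V) (sgn : E → Bool) (F : Finset E) : Prop :=
  IsCircuit ends F ∧ Odd (negEdges sgn F).card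

/-- `P` is the edge set of a path with (distinct) end-vertices `u` and `v`. -/
def IsPath (ends : E → Sym2 V) (P : Finset E) (u v : V) : Prop :=
  P.Nonempty ∧ ConnectedOn ends P ∧ u ≠ v ∧
    u ∈ support ends P ∧ v ∈ support ends P ∧
    degree ends P u = 1 ∧ degree ends P v = 1 ∧
    ∀ w ∈ support ends P, w ≠ u → w ≠ v → degree ends P w = 2

/-- A short barbell: two unbalanced circuits meeting at exactly one vertex. -/
def IsShortBarbell (ends : E → Sym2 V) (sgn : E → Bool) (F : Finset E) : Prop :=
  ∃ C₁ C₂ : Finset E, Disjoint C₁ C₂ ∧ F = C₁ ∪ C₂ ∧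
    IsUnbalancedCircuit ends sgn C₁ ∧ IsUnbalancedCircuit ends sgn C₂ ∧
    ∃ v : V, support ends C₁ ∩ support ends C₂ = {v}

/-- A long barbell: two disjoint unbalanced circuits joined by a path meeting
them only at its end-vertices. -/
def IsLongBarbell (ends : E → Sym2 V) (sgn : E → Bool) (F : Finset E) : Prop :=
  ∃ (C₁ C₂ P : Finset E) (u v : V),
    Disjoint C₁ C₂ ∧ Disjoint C₁ P ∧ Disjoint C₂ P ∧ F = C₁ ∪ C₂ ∪ P ∧
    IsUnbalancedCircuit ends sgn C₁ ∧ IsUnbalancedCircuit ends sgn C₂ ∧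
    Disjoint (support ends C₁) (support ends C₂) ∧
    IsPath ends P u v ∧
    support ends P ∩ support ends C₁ = {u} ∧
    support ends P ∩ support ends C₂ = {v}

def IsBarbell (ends : E → Sym2 V) (sgn : E → Bool) (F : Finset E) : Prop :=
  IsShortBarbell ends sgn F ∨ IsLongBarbell ends sgn F

/-- A signed circuit: a balanced circuit, a short barbell or a long barbell. -/
def IsSignedCircuit (ends : E → Sym2 V) (sgn : E → Bool) (F : Finset E) : Prop :=
  IsBalancedCircuit ends sgn F ∨ IsShortBarbell ends sgn F ∨ IsLongBarbell ends sgn F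

/-- `e` is a bridge (cut-edge) of the subgraph with edge set `F`. -/
def IsBridgeIn (ends : E → Sym2 V) (F : Finset E) (e : E) : Prop :=
  e ∈ F ∧ ∀ a b : V, ends e = s(a, b) → ¬ Reach ends (F.erase e) a b

/-- The bridges of the whole graph. -/
def bridges (ends : E → Sym2 V) : Finset E :=
  Finset.univ.filter fun e => IsBridgeIn ends Finset.univ e

/-- The non-bridge edges of the whole graph. -/
def nonbridges (ends : E → Sym2 V) : Finset E := Finset.univ \ bridges ends

/-- Reachability inside `F` avoiding the vertex `x`. -/
def ReachAvoid (ends : E → Sym2 V) (F : Finset E) (x : V) : V → V → Prop :=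
  Relation.ReflTransGen fun a b => a ≠ x ∧ b ≠ x ∧ ∃ e ∈ F, ends e = s(a, b)

/-- `x` is a cut-vertex of the subgraph with edge set `F`. -/
def IsCutVertexOn (ends : E → Sym2 V) (F : Finset E) (x : V) : Prop :=
  ∃ a ∈ support ends F, ∃ b ∈ support ends F,
    a ≠ x ∧ b ≠ x ∧ Reach ends F a b ∧ ¬ ReachAvoid ends F x a b

/-- The subgraph with edge set `F` is 2-connected (connected and without cut-vertices). -/
def TwoConnectedOn (ends : E → Sym2 V) (F : Finset E) : Prop :=
  ConnectedOn ends F ∧ ∀ x : V, ¬ IsCutVertexOn ends F x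

/-- The whole graph is 2-connected. -/
def TwoConnected (ends : E → Sym2 V) : Prop :=
  Connected ends ∧ ∀ x : V, ¬ IsCutVertexOn ends (Finset.univ : Finset E) x

/-- Total length of a collection of subgraphs. -/
def totalLength (𝒞 : List (Finset E)) : ℕ := (𝒞.map Finset.card).sum

/-- The width of the edge `e` with respect to the collection `𝒞`. -/
def widthAt (𝒞 : List (Finset E)) (e : E) : ℕ := (𝒞.filter fun C => e ∈ C).length

/-- `𝒞` covers every edge of the graph. -/
def CoversAll (𝒞 : List (Finset E)) : Prop := ∀ e : E, ∃ C ∈ 𝒞, e ∈ C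

/-- A tree of Eulerian graphs: connected, and after deleting all bridges every
component is Eulerian (equivalently all degrees in the bridgeless part are even). -/
def IsTreeOfEulerian (ends : E → Sym2 V) : Prop :=
  Connected ends ∧ ∀ v : V, Even (degree ends (nonbridges ends) v)

/-- Non-bridge non-loop edges. -/
def nbnl (ends : E → Sym2 V) : Finset E :=
  (nonbridges ends).filter fun e => ¬ IsLoop ends e

/-- A tree of circuits: connected, and after deleting all bridges and loops every
vertex has degree 0 or 2 (each component is an isolated vertex or a circuit). -/
def IsTreeOfCircuits (ends : E → Sym2 V) : Prop :=
  Connected ends ∧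
    ∀ v : V, degree ends (nbnl ends) v = 0 ∨ degree ends (nbnl ends) v = 2

/-- The balloon containing `v`: the edge set of the component of `v` in the
graph of non-bridge non-loop edges. -/
def compBalloon (ends : E → Sym2 V) (v : V) : Finset E :=
  (nbnl ends).filter fun e => ∃ w ∈ ends e, Reach ends (nbnl ends) v w

/-- Valency of the balloon of `v`: the number of bridges and loops incident
with its component. -/
def balloonValency (ends : E → Sym2 V) (v : V) : ℕ :=
  (Finset.univ.filter fun e =>
    (IsBridgeIn ends Finset.univ e ∨ IsLoop ends e) ∧
      ∃ w ∈ ends e, Reach ends (nbnl ends) v w).card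

/-- A balloon consisting of a single negative loop. -/
def IsNegLoopBalloon (ends : E → Sym2 V) (sgn : E → Bool) (B : Finset E) : Prop :=
  ∃ e : E, IsLoop ends e ∧ sgn e = true ∧ B = {e}

/-- A leaf balloon: a negative loop, or a nontrivial balloon of valency 1. -/
def IsLeafBalloon (ends : E → Sym2 V) (sgn : E → Bool) (B : Finset E) : Prop :=
  IsNegLoopBalloon ends sgn B ∨
    ∃ v : V, B = compBalloon ends v ∧ B.Nonempty ∧ balloonValency ends v = 1

/-- A leaf circuit: a negative loop, or a balloon of valency 1 which is a circuit. -/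
def IsLeafCircuit (ends : E → Sym2 V) (sgn : E → Bool) (B : Finset E) : Prop :=
  IsNegLoopBalloon ends sgn B ∨
    ∃ v : V, B = compBalloon ends v ∧ IsCircuit ends B ∧ balloonValency ends v = 1

/-- An inner circuit: a balloon of valency at least 2 which is a circuit. -/
def IsInnerCircuit (ends : E → Sym2 V) (B : Finset E) : Prop :=
  ∃ v : V, B = compBalloon ends v ∧ IsCircuit ends B ∧ 2 ≤ balloonValency ends v

/-- Number of unbalanced circuits of a tree of circuits: negative loops together
with the unbalanced (nontrivial) balloons. -/
def numUnbalancedCircuits (ends : E → Sym2 V) (sgn : E → Bool) : ℕ :=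
  (Finset.univ.filter fun e : E => IsLoop ends e ∧ sgn e = true).card +
    Set.ncard {B : Finset E |
      (∃ v : V, B = compBalloon ends v) ∧ B.Nonempty ∧ Odd (negEdges sgn B).card}

/-- Flow-admissibility: every edge lies in a signed circuit (Bouchet). -/
def FlowAdmissible (ends : E → Sym2 V) (sgn : E → Bool) : Prop :=
  ∀ e : E, ∃ C : Finset E, IsSignedCircuit ends sgn C ∧ e ∈ C

/-- `e` has exactly one end-vertex in `U`. -/
def crosses (ends : E → Sym2 V) (U : Finset V) (e : E) : Prop :=
  ∃ a b : V, ends e = s(a, b) ∧ ((a ∈ U ∧ b ∉ U) ∨ (a ∉ U ∧ b ∈ U))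

/-- Switching the signature at the vertex set `U`. -/
def switch (ends : E → Sym2 V) (U : Finset V) (sgn : E → Bool) : E → Bool :=
  fun e => if crosses ends U e then ! (sgn e) else sgn e

/-- The number of negative edges of a signature. -/
def negCount (sgn : E → Bool) : ℕ := (Finset.univ.filter fun e => sgn e = true).card

/-- `sgn` is a minimum signature: no equivalent (switched) signature has fewer
negative edges. -/
def IsMinSignature (ends : E → Sym2 V) (sgn : E → Bool) : Prop :=
  ∀ U : Finset V, negCount sgn ≤ negCount (switch ends U sgn)

/-- `{e₁, e₂}` is a 2-edge-cut of the subgraph with edge set `F`. -/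
def IsTwoEdgeCut (ends : E → Sym2 V) (F : Finset E) (e₁ e₂ : E) : Prop :=
  e₁ ≠ e₂ ∧ e₁ ∈ F ∧ e₂ ∈ F ∧ ¬ IsBridgeIn ends F e₁ ∧ ¬ IsBridgeIn ends F e₂ ∧
    (∀ a b : V, ends e₁ = s(a, b) → ¬ Reach ends ((F.erase e₁).erase e₂) a b) ∧
    (∀ a b : V, ends e₂ = s(a, b) → ¬ Reach ends ((F.erase e₁).erase e₂) a b)

/-- `b` is a bridge of `F` whose removal leaves two parts which are both unbalanced. -/
def SeparatesUnbalanced (ends : E → Sym2 V) (sgn : E → Bool) (F : Finset E) (b : E) : Prop :=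
  IsBridgeIn ends F b ∧
    ∀ a c : V, ends b = s(a, c) →
      (∃ C ⊆ F.erase b, IsUnbalancedCircuit ends sgn C ∧
        ∃ w ∈ support ends C, Reach ends (F.erase b) a w) ∧
      (∃ C ⊆ F.erase b, IsUnbalancedCircuit ends sgn C ∧
        ∃ w ∈ support ends C, Reach ends (F.erase b) c w)

/-- `T` is a spanning tree of the whole graph: spanning, connected and acyclic. -/
def IsSpanningTree (ends : E → Sym2 V) (T : Finset E) : Prop :=
  (∀ u v : V, Reach ends T u v) ∧ ∀ C ⊆ T, ¬ IsCircuit ends C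


-- ### Auxiliary infrastructure for statement2

section Aux
set_option linter.unusedSectionVars false

variable {V E : Type} [Fintype V] [Fintype E] [DecidableEq V] [DecidableEq E]

/-- Contribution of an edge to a degree. -/
def ectr (ends : E → Sym2 V) (e : E) (w : V) : ℕ :=
  if ends e = Sym2.diag w then 2 else if w ∈ ends e then 1 else 0

lemma degree_eq_sum (ends : E → Sym2 V) (F : Finset E) (w : V) :
    degree ends F w = ∑ e ∈ F, ectr ends e w := rfl

lemma ectr_eq (ends : E → Sym2 V) {e : E} {a b : V} (h : ends e = s(a, b)) (w : V) :
    ectr ends e w = (if w = a then 1 else 0) + (if w = b then 1 else 0) := by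
  have hdiag : (s(a, b) = Sym2.diag w) ↔ (a = w ∧ b = w) := by
    rw [show Sym2.diag w = s(w, w) from rfl, Sym2.eq_iff]; tauto
  have hmem : (w ∈ s(a, b)) ↔ (w = a ∨ w = b) := Sym2.mem_iff
  unfold ectr
  rw [h]
  by_cases h1 : w = a <;> by_cases h2 : w = b
  · rw [if_pos (hdiag.mpr ⟨h1.symm, h2.symm⟩), if_pos h1, if_pos h2]
  · rw [if_neg (fun hc => h2 ((hdiag.mp hc).2.symm)), if_pos (hmem.mpr (Or.inl h1)),
      if_pos h1, if_neg h2]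
  · rw [if_neg (fun hc => h1 ((hdiag.mp hc).1.symm)), if_pos (hmem.mpr (Or.inr h2)),
      if_neg h1, if_pos h2]
  · rw [if_neg (fun hc => h1 ((hdiag.mp hc).1.symm)),
      if_neg (fun hc => (hmem.mp hc).elim h1 h2), if_neg h1, if_neg h2]

lemma degree_union (ends : E → Sym2 V) {F G : Finset E} (h : Disjoint F G) (w : V) :
    degree ends (F ∪ G) w = degree ends F w + degree ends G w :=
  Finset.sum_union h

/-- Degree along a list of edges. -/
def degL (ends : E → Sym2 V) (L : List E) (w : V) : ℕ :=
  (L.map (fun e => ectr ends e w)).sum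

lemma degL_toFinset (ends : E → Sym2 V) {L : List E} (h : L.Nodup) (w : V) :
    degree ends L.toFinset w = degL ends L w := List.sum_toFinset _ h

lemma degL_append (ends : E → Sym2 V) (L M : List E) (w : V) :
    degL ends (L ++ M) w = degL ends L w + degL ends M w := by simp [degL]

lemma mem_support_iff (ends : E → Sym2 V) {F : Finset E} {w : V} :
    w ∈ support ends F ↔ ∃ e ∈ F, w ∈ ends e := by simp [support]

lemma support_mono (ends : E → Sym2 V) {F G : Finset E} (h : F ⊆ G) :
    support ends F ⊆ support ends G := by
  intro w hw
  rw [mem_support_iff] at hw ⊢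
  obtain ⟨e, he, hm⟩ := hw
  exact ⟨e, h he, hm⟩

lemma support_union (ends : E → Sym2 V) (F G : Finset E) :
    support ends (F ∪ G) = support ends F ∪ support ends G := by
  ext w
  simp only [mem_support_iff, Finset.mem_union]
  constructor
  · rintro ⟨e, he | he, hm⟩
    · exact Or.inl ⟨e, he, hm⟩
    · exact Or.inr ⟨e, he, hm⟩
  · rintro (⟨e, he, hm⟩ | ⟨e, he, hm⟩)
    · exact ⟨e, Or.inl he, hm⟩
    · exact ⟨e, Or.inr he, hm⟩

lemma exists_edge_of_degree_ne_zero (ends : E → Sym2 V) {F : Finset E} {w : V}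
    (h : degree ends F w ≠ 0) : ∃ e ∈ F, w ∈ ends e := by
  by_contra hc
  push_neg at hc
  apply h
  rw [degree_eq_sum]
  apply Finset.sum_eq_zero
  intro e he
  have hm := hc e he
  unfold ectr
  rw [if_neg, if_neg hm]
  intro hd
  exact hm (by rw [hd]; exact Sym2.mem_mk_left w w)

lemma degree_pos_of_mem_support (ends : E → Sym2 V) {F : Finset E} {w : V}
    (h : w ∈ support ends F) : 1 ≤ degree ends F w := by
  rw [mem_support_iff] at h
  obtain ⟨e, he, hm⟩ := h
  have h1 : 1 ≤ ectr ends e w := by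
    unfold ectr; split_ifs <;> omega
  calc 1 ≤ ectr ends e w := h1
    _ ≤ degree ends F w := by
        rw [degree_eq_sum]
        exact Finset.single_le_sum (f := fun e => ectr ends e w) (fun i _ => Nat.zero_le _) he

lemma mem_support_of_mem_edge (ends : E → Sym2 V) {F : Finset E} {w : V} {e : E}
    (he : e ∈ F) (hm : w ∈ ends e) : w ∈ support ends F :=
  (mem_support_iff ends).mpr ⟨e, he, hm⟩

lemma reach_mono (ends : E → Sym2 V) {F G : Finset E} (h : F ⊆ G) {a b : V}
    (hr : Reach ends F a b) : Reach ends G a b :=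
  Relation.ReflTransGen.mono (r := fun a b => ∃ e ∈ F, ends e = s(a, b))
    (p := fun a b => ∃ e ∈ G, ends e = s(a, b))
    (by intro x y ⟨e, he, hh⟩; exact ⟨e, h he, hh⟩) a b hr

lemma reach_symm (ends : E → Sym2 V) {F : Finset E} : Symmetric (Reach ends F) :=
  by
  intro a b hab
  induction hab with
  | refl => exact Relation.ReflTransGen.refl
  | tail _ hst ih =>
    obtain ⟨e, he, hh⟩ := hst
    exact Relation.ReflTransGen.head ⟨e, he, by rw [hh, Sym2.eq_swap]⟩ ih

lemma reach_trans (ends : E → Sym2 V) {F : Finset E} {a b c : V}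
    (h1 : Reach ends F a b) (h2 : Reach ends F b c) : Reach ends F a c :=
  Relation.ReflTransGen.trans h1 h2

lemma count_cons' {α : Type} [DecidableEq α] (a b : α) (l : List α) :
    (a :: l).count b = l.count b + (if b = a then 1 else 0) := by
  by_cases h : b = a
  · subst h; simp [List.count_cons]
  · simp [List.count_cons, h, Ne.symm h]

/-- A walk along edges, recording the vertex sequence. -/
inductive WalkV (ends : E → Sym2 V) : V → V → List E → List V → Prop
  | nil (a : V) : WalkV ends a a [] [a]
  | cons {a b c : V} {e : E} {L : List E} {vs : List V} :
      ends e = s(a, b) → WalkV ends b c L vs → WalkV ends a c (e :: L) (a :: vs)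

lemma WalkV.vs_ne_nil {ends : E → Sym2 V} {a b : V} {L : List E} {vs : List V}
    (w : WalkV ends a b L vs) : vs ≠ [] := by cases w <;> simp

lemma WalkV.start_mem {ends : E → Sym2 V} {a b : V} {L : List E} {vs : List V}
    (w : WalkV ends a b L vs) : a ∈ vs := by cases w <;> simp

lemma WalkV.end_mem {ends : E → Sym2 V} {a b : V} {L : List E} {vs : List V}
    (w : WalkV ends a b L vs) : b ∈ vs := by
  induction w with
  | nil => simp
  | cons h w ih => simp [ih]

lemma WalkV.eq_of_nil {ends : E → Sym2 V} {a b : V} {vs : List V}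
    (w : WalkV ends a b [] vs) : a = b := by cases w; rfl

lemma WalkV.append {ends : E → Sym2 V} {a b c : V} {L1 L2 : List E} {vs1 vs2 : List V}
    (w1 : WalkV ends a b L1 vs1) (w2 : WalkV ends b c L2 vs2) :
    WalkV ends a c (L1 ++ L2) (vs1.dropLast ++ vs2) := by
  induction w1 with
  | nil => simpa using w2
  | cons h w ih =>
    rw [List.dropLast_cons_of_ne_nil w.vs_ne_nil]
    exact WalkV.cons h (ih w2)

lemma WalkV.reverse {ends : E → Sym2 V} {a b : V} {L : List E} {vs : List V}
    (w : WalkV ends a b L vs) : WalkV ends b a L.reverse vs.reverse := by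
  induction w with
  | nil => simpa using WalkV.nil _
  | cons h w ih =>
    rename_i a' b' c' e L' vs'
    obtain ⟨t, rfl⟩ : ∃ t, vs' = b' :: t := by cases w <;> exact ⟨_, rfl⟩
    have single : WalkV ends b' a' [e] [b', a'] :=
      WalkV.cons (by rw [h, Sym2.eq_swap]) (WalkV.nil _)
    have h2 := ih.append single
    simp only [List.reverse_cons] at h2 ⊢
    rw [List.dropLast_concat] at h2
    simpa [List.append_assoc] using h2

lemma WalkV.edge_endpoint_mem {ends : E → Sym2 V} {a b : V} {L : List E} {vs : List V}
    (w : WalkV ends a b L vs) {e : E} (he : e ∈ L) {x : V} (hx : x ∈ ends e) : x ∈ vs := by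
  induction w with
  | nil => simp at he
  | cons h w ih =>
    rename_i a' b' c' e' L' vs'
    rcases List.mem_cons.mp he with rfl | he'
    · rw [h, Sym2.mem_iff] at hx
      rcases hx with rfl | rfl
      · simp
      · exact List.mem_cons_of_mem _ w.start_mem
    · exact List.mem_cons_of_mem _ (ih he')

lemma WalkV.reach {ends : E → Sym2 V} {a b : V} {L : List E} {vs : List V}
    (w : WalkV ends a b L vs) : ∀ x ∈ vs, Reach ends L.toFinset a x := by
  induction w with
  | nil =>
    intro x hx
    rcases List.mem_singleton.mp hx with rfl
    exact Relation.ReflTransGen.refl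
  | cons h w ih =>
    rename_i a' b' c' e L' vs'
    intro x hx
    rcases List.mem_cons.mp hx with rfl | hx'
    · exact Relation.ReflTransGen.refl
    · have step : Reach ends (e :: L').toFinset a' b' :=
        Relation.ReflTransGen.single ⟨e, by simp, h⟩
      exact reach_trans ends step
        (reach_mono ends (by intro z hz; simp at hz ⊢; tauto) (ih x hx'))

lemma WalkV.degcount {ends : E → Sym2 V} {a b : V} {L : List E} {vs : List V}
    (w : WalkV ends a b L vs) (z : V) :
    degL ends L z + (if z = a then 1 else 0) + (if z = b then 1 else 0)
      = 2 * vs.count z := by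
  induction w with
  | nil =>
    rename_i a'
    simp only [degL, List.map_nil, List.sum_nil, count_cons', List.count_nil]
    split_ifs <;> omega
  | cons h w ih =>
    rename_i a' b' c' e L' vs'
    have hd : degL ends (e :: L') z = ectr ends e z + degL ends L' z := by simp [degL]
    rw [hd, ectr_eq ends h z, count_cons']
    have ih' := ih
    split_ifs at ih' ⊢ <;> omega

end Aux

section Aux2
set_option linter.unusedSectionVars false
variable {V E : Type} [Fintype V] [Fintype E] [DecidableEq V] [DecidableEq E]

lemma sym2_exists (z : Sym2 V) : ∃ x y, z = s(x, y) := by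
  induction z using Sym2.ind with
  | _ a b => exact ⟨a, b, rfl⟩

lemma WalkV.splice_first {ends : E → Sym2 V} {c b : V} {L : List E} {vs : List V}
    (w : WalkV ends c b L vs) {a : V} (ha : a ∈ vs) :
    ∃ L1 L2 vs1 vs2, L = L1 ++ L2 ∧ WalkV ends c a L1 vs1 ∧ WalkV ends a b L2 vs2 ∧
      vs1.count a = 1 := by
  induction w with
  | nil =>
    rename_i a'
    rcases List.mem_singleton.mp ha with rfl
    exact ⟨[], [], [a], [a], rfl, WalkV.nil a, WalkV.nil a, by simp⟩
  | cons h w ih =>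
    rename_i s t u e L' vs'
    by_cases hac : a = s
    · subst hac
      exact ⟨[], e :: L', [a], a :: vs', rfl, WalkV.nil a, WalkV.cons h w, by simp⟩
    · have ha' : a ∈ vs' := by
        rcases List.mem_cons.mp ha with h' | h'
        · exact absurd h' hac
        · exact h'
      obtain ⟨M1, M2, m1, m2, heq, w1, w2, hcnt⟩ := ih ha'
      refine ⟨e :: M1, M2, s :: m1, m2, by rw [heq, List.cons_append], WalkV.cons h w1, w2, ?_⟩
      rw [count_cons', if_neg hac, hcnt]

lemma WalkV.second_split {ends : E → Sym2 V} {a b : V} {L : List E} {vs : List V}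
    (w : WalkV ends a b L vs) (h2 : 2 ≤ vs.count a) :
    ∃ L1 L2 vs1 vs2, L = L1 ++ L2 ∧ WalkV ends a a L1 vs1 ∧ WalkV ends a b L2 vs2 ∧
      vs1.count a = 2 := by
  cases w with
  | nil => simp at h2
  | cons h w =>
    rename_i t u e L' vs'
    have ha' : a ∈ vs' := by
      have hc : (a :: vs').count a = vs'.count a + 1 := by rw [count_cons', if_pos rfl]
      have : 1 ≤ vs'.count a := by omega
      exact List.count_pos_iff.mp (by omega)
    obtain ⟨M1, M2, m1, m2, heq, w1, w2, hcnt⟩ := w.splice_first ha'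
    refine ⟨e :: M1, M2, a :: m1, m2, by rw [heq, List.cons_append], WalkV.cons h w1, w2, ?_⟩
    rw [count_cons', if_pos rfl, hcnt]

lemma WalkV.closed_even {ends : E → Sym2 V} {w0 : V} {L : List E} {vs : List V}
    (w : WalkV ends w0 w0 L vs) (hn : L.Nodup) (z : V) :
    Even (degree ends L.toFinset z) := by
  have h := w.degcount z
  rw [← degL_toFinset ends hn] at h
  rw [Nat.even_iff]
  split_ifs at h <;> omega

lemma WalkV.closed_connectedOn {ends : E → Sym2 V} {w0 : V} {L : List E} {vs : List V}
    (w : WalkV ends w0 w0 L vs) : ConnectedOn ends L.toFinset := by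
  intro u hu v hv
  rw [mem_support_iff] at hu hv
  obtain ⟨e, he, hm⟩ := hu
  obtain ⟨f, hf, hm'⟩ := hv
  have hu' : u ∈ vs := w.edge_endpoint_mem (List.mem_toFinset.mp he) hm
  have hv' : v ∈ vs := w.edge_endpoint_mem (List.mem_toFinset.mp hf) hm'
  exact reach_trans ends (reach_symm ends (w.reach u hu')) (w.reach v hv')

lemma eulerian_union (ends : E → Sym2 V) {x y : V} {L M : List E} {vsL vsM : List V}
    (wL : WalkV ends x y L vsL) (wM : WalkV ends x y M vsM)
    (hLn : L.Nodup) (hMn : M.Nodup)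
    (hdisj : Disjoint L.toFinset M.toFinset) :
    IsEulerianOn ends (L.toFinset ∪ M.toFinset) := by
  constructor
  · intro u hu v hv
    have key : ∀ z, z ∈ support ends (L.toFinset ∪ M.toFinset) →
        Reach ends (L.toFinset ∪ M.toFinset) x z := by
      intro z hz
      rw [support_union] at hz
      rcases Finset.mem_union.mp hz with hz | hz
      · rw [mem_support_iff] at hz
        obtain ⟨e, he, hm⟩ := hz
        exact reach_mono ends Finset.subset_union_left
          (wL.reach z (wL.edge_endpoint_mem (List.mem_toFinset.mp he) hm))
      · rw [mem_support_iff] at hz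
        obtain ⟨e, he, hm⟩ := hz
        exact reach_mono ends Finset.subset_union_right
          (wM.reach z (wM.edge_endpoint_mem (List.mem_toFinset.mp he) hm))
    exact reach_trans ends (reach_symm ends (key u hu)) (key v hv)
  · intro z _
    rw [degree_union ends hdisj, Nat.even_iff]
    have h1 := wL.degcount z
    have h2 := wM.degcount z
    rw [← degL_toFinset ends hLn] at h1
    rw [← degL_toFinset ends hMn] at h2
    split_ifs at h1 h2 <;> omega

lemma even_degree_sdiff (ends : E → Sym2 V) {X F : Finset E} (hsub : F ⊆ X)
    (hX : ∀ w, Even (degree ends X w)) (hF : ∀ w, Even (degree ends F w)) (w : V) :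
    Even (degree ends (X \ F) w) := by
  have h := degree_union ends (Finset.disjoint_sdiff (s := F) (t := X)) w
  rw [Finset.union_sdiff_of_subset hsub] at h
  have h1 := hX w
  have h2 := hF w
  rw [Nat.even_iff] at h1 h2 ⊢
  omega

lemma extend_trail (ends : E → Sym2 V) (X : Finset E)
    (heven : ∀ w, Even (degree ends X w)) (w0 : V) :
    ∀ n (z : V) (L : List E) (vs : List V), WalkV ends w0 z L vs → L.Nodup →
      L.toFinset ⊆ X → L ≠ [] → (X \ L.toFinset).card ≤ n →
      ∃ L' vs', L' ≠ [] ∧ L'.Nodup ∧ L'.toFinset ⊆ X ∧ WalkV ends w0 w0 L' vs' := by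
  intro n
  induction n with
  | zero =>
    intro z L vs wk hn hsub hne hcard
    by_cases hz : z = w0
    · subst hz; exact ⟨L, vs, hne, hn, hsub, wk⟩
    · exfalso
      have hempty : X \ L.toFinset = ∅ := by
        rw [← Finset.card_eq_zero]; omega
      have hdeg := degree_union ends (Finset.disjoint_sdiff (s := L.toFinset) (t := X)) z
      rw [Finset.union_sdiff_of_subset hsub, hempty] at hdeg
      have hzero : degree ends (∅ : Finset E) z = 0 := by simp [degree_eq_sum]
      rw [hzero] at hdeg
      have hLz := wk.degcount z
      rw [← degL_toFinset ends hn, if_neg hz, if_pos rfl] at hLz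
      have hXe := heven z
      rw [Nat.even_iff] at hXe
      omega
  | succ n ih =>
    intro z L vs wk hn hsub hne hcard
    by_cases hz : z = w0
    · subst hz; exact ⟨L, vs, hne, hn, hsub, wk⟩
    · have hLz := wk.degcount z
      rw [← degL_toFinset ends hn, if_neg hz, if_pos rfl] at hLz
      have hdeg := degree_union ends (Finset.disjoint_sdiff (s := L.toFinset) (t := X)) z
      rw [Finset.union_sdiff_of_subset hsub] at hdeg
      have hXe := heven z
      rw [Nat.even_iff] at hXe
      have hodd : degree ends (X \ L.toFinset) z ≠ 0 := by omega
      obtain ⟨e, he, hm⟩ := exists_edge_of_degree_ne_zero ends hodd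
      obtain ⟨c, hc⟩ := Sym2.mem_iff_exists.mp hm
      have heX : e ∈ X := (Finset.mem_sdiff.mp he).1
      have heL : e ∉ L.toFinset := (Finset.mem_sdiff.mp he).2
      have wk' : WalkV ends w0 c (L ++ [e]) (vs.dropLast ++ [z, c]) :=
        wk.append (WalkV.cons hc (WalkV.nil c))
      have hn' : (L ++ [e]).Nodup := by
        rw [List.nodup_append]
        exact ⟨hn, List.nodup_singleton e,
          fun t ht b hb htb => heL (List.mem_toFinset.mpr (by
            rcases List.mem_singleton.mp hb with rfl; rw [← htb]; exact ht))⟩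
      have hsub' : (L ++ [e]).toFinset ⊆ X := by
        intro t ht
        simp only [List.toFinset_append, Finset.mem_union, List.mem_toFinset] at ht
        rcases ht with ht | ht
        · exact hsub (List.mem_toFinset.mpr ht)
        · rcases List.mem_singleton.mp ht with rfl; exact heX
      have hcard' : (X \ (L ++ [e]).toFinset).card ≤ n := by
        have hss : X \ (L ++ [e]).toFinset ⊆ (X \ L.toFinset).erase e := by
          intro t ht
          simp only [Finset.mem_sdiff, List.toFinset_append, Finset.mem_union,
            List.mem_toFinset, List.mem_singleton, not_or] at ht
          exact Finset.mem_erase.mpr ⟨ht.2.2, Finset.mem_sdiff.mpr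
            ⟨ht.1, fun hh => ht.2.1 (List.mem_toFinset.mp hh)⟩⟩
        have h1 := Finset.card_le_card hss
        rw [Finset.card_erase_of_mem he] at h1
        have h2 : 1 ≤ (X \ L.toFinset).card := Finset.card_pos.mpr ⟨e, he⟩
        omega
      exact ih c (L ++ [e]) _ wk' hn' hsub' (by simp) hcard'

lemma exists_closed_trail (ends : E → Sym2 V) (X : Finset E)
    (heven : ∀ w, Even (degree ends X w)) {w0 : V} (hw : w0 ∈ support ends X) :
    ∃ L vs, L ≠ [] ∧ L.Nodup ∧ L.toFinset ⊆ X ∧ WalkV ends w0 w0 L vs := by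
  rw [mem_support_iff] at hw
  obtain ⟨e, he, hm⟩ := hw
  obtain ⟨c, hc⟩ := Sym2.mem_iff_exists.mp hm
  exact extend_trail ends X heven w0 (X \ [e].toFinset).card c [e] [w0, c]
    (WalkV.cons hc (WalkV.nil c)) (List.nodup_singleton e)
    (by intro t ht; rcases List.mem_singleton.mp (List.mem_toFinset.mp ht) with rfl; exact he)
    (by simp) le_rfl

lemma euler_tour (ends : E → Sym2 V) (X : Finset E)
    (heven : ∀ w, Even (degree ends X w)) (hconn : ConnectedOn ends X)
    {w0 : V} (hw : w0 ∈ support ends X) :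
    ∃ L vs, L.Nodup ∧ L.toFinset = X ∧ WalkV ends w0 w0 L vs := by
  suffices key : ∀ n (L : List E) (vs : List V), WalkV ends w0 w0 L vs → L.Nodup →
      L.toFinset ⊆ X → (X \ L.toFinset).card ≤ n →
      ∃ L' vs', L'.Nodup ∧ L'.toFinset = X ∧ WalkV ends w0 w0 L' vs' by
    exact key (X \ ([] : List E).toFinset).card [] [w0] (WalkV.nil w0) (by simp) (by simp) le_rfl
  intro n
  induction n with
  | zero =>
    intro L vs wk hn hsub hcard
    have hempty : X \ L.toFinset = ∅ := by rw [← Finset.card_eq_zero]; omega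
    exact ⟨L, vs, hn, Finset.Subset.antisymm hsub (Finset.sdiff_eq_empty_iff_subset.mp hempty), wk⟩
  | succ n ih =>
    intro L vs wk hn hsub hcard
    by_cases hdone : X \ L.toFinset = ∅
    · exact ⟨L, vs, hn, Finset.Subset.antisymm hsub (Finset.sdiff_eq_empty_iff_subset.mp hdone), wk⟩
    · obtain ⟨e0, he0⟩ := Finset.nonempty_iff_ne_empty.mpr hdone
      obtain ⟨p, q, hpq⟩ := sym2_exists (ends e0)
      have hq : q ∈ support ends X := mem_support_of_mem_edge ends
        (Finset.mem_sdiff.mp he0).1 (by rw [hpq]; exact Sym2.mem_mk_right p q)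
      have claim : ∃ y f, y ∈ vs ∧ f ∈ X \ L.toFinset ∧ y ∈ ends f := by
        have hr : Reach ends X w0 q := hconn w0 hw q hq
        have main : ∀ q', Reach ends X w0 q' →
            q' ∈ vs ∨ ∃ y f, y ∈ vs ∧ f ∈ X \ L.toFinset ∧ y ∈ ends f := by
          intro q' hr'
          induction hr' with
          | refl => exact Or.inl wk.start_mem
          | tail hstep hlast ihr =>
            rename_i c q''
            obtain ⟨f, hf, hends⟩ := hlast
            rcases ihr with hc' | hres
            · by_cases hfL : f ∈ L.toFinset
              · exact Or.inl (wk.edge_endpoint_mem (List.mem_toFinset.mp hfL)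
                  (by rw [hends]; exact Sym2.mem_mk_right c q''))
              · exact Or.inr ⟨c, f, hc', Finset.mem_sdiff.mpr ⟨hf, hfL⟩,
                  by rw [hends]; exact Sym2.mem_mk_left c q''⟩
            · exact Or.inr hres
        rcases main q hr with hqvs | hres
        · exact ⟨q, e0, hqvs, he0, by rw [hpq]; exact Sym2.mem_mk_right p q⟩
        · exact hres
      obtain ⟨y, f, hyvs, hf, hyf⟩ := claim
      have heven' : ∀ w, Even (degree ends (X \ L.toFinset) w) :=
        fun w => even_degree_sdiff ends hsub heven (fun w' => wk.closed_even hn w') w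
      have hy' : y ∈ support ends (X \ L.toFinset) := mem_support_of_mem_edge ends hf hyf
      obtain ⟨M, ms, hM0, hMn, hMsub, wM⟩ := exists_closed_trail ends _ heven' hy'
      obtain ⟨L1, L2, vs1, vs2, hsplit, w1, w2, _⟩ := wk.splice_first hyvs
      have wnew : WalkV ends w0 w0 (L1 ++ (M ++ L2)) _ := w1.append (wM.append w2)
      have hMdisjL : ∀ t ∈ M, t ∉ L := fun t ht htL =>
        (Finset.mem_sdiff.mp (hMsub (List.mem_toFinset.mpr ht))).2 (List.mem_toFinset.mpr htL)
      have hnL : (L1 ++ L2).Nodup := hsplit ▸ hn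
      rw [List.nodup_append] at hnL
      have hn' : (L1 ++ (M ++ L2)).Nodup := by
        rw [List.nodup_append, List.nodup_append]
        refine ⟨hnL.1, ⟨hMn, hnL.2.1, fun t ht b hb htb => hMdisjL t ht (hsplit ▸ List.mem_append_right L1 (by subst htb; exact hb))⟩, ?_⟩
        intro t ht b hb htb
        subst htb
        rcases List.mem_append.mp hb with ht' | ht'
        · exact hMdisjL t ht' (hsplit ▸ List.mem_append_left L2 ht)
        · exact hnL.2.2 t ht t ht' rfl
      have hsub' : (L1 ++ (M ++ L2)).toFinset ⊆ X := by
        intro t ht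
        simp only [List.toFinset_append, Finset.mem_union, List.mem_toFinset] at ht
        rcases ht with ht | ht | ht
        · exact hsub (by rw [hsplit]; exact List.mem_toFinset.mpr (List.mem_append_left L2 ht))
        · exact (Finset.mem_sdiff.mp (hMsub (List.mem_toFinset.mpr ht))).1
        · exact hsub (by rw [hsplit]; exact List.mem_toFinset.mpr (List.mem_append_right L1 ht))
      have hcard' : (X \ (L1 ++ (M ++ L2)).toFinset).card ≤ n := by
        obtain ⟨m, hm⟩ := List.exists_mem_of_ne_nil M hM0
        have hmX : m ∈ X \ L.toFinset := Finset.mem_sdiff.mp (hMsub (List.mem_toFinset.mpr hm)) |> fun h => Finset.mem_sdiff.mpr h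
        have hss : X \ (L1 ++ (M ++ L2)).toFinset ⊆ (X \ L.toFinset).erase m := by
          intro t ht
          simp only [Finset.mem_sdiff, List.toFinset_append, Finset.mem_union,
            List.mem_toFinset, not_or] at ht
          refine Finset.mem_erase.mpr ⟨fun hh => ht.2.2.1 (hh ▸ hm), Finset.mem_sdiff.mpr ⟨ht.1, fun hh => ?_⟩⟩
          rcases List.mem_append.mp (hsplit ▸ List.mem_toFinset.mp hh) with h' | h'
          · exact ht.2.1 h'
          · exact ht.2.2.2 h'
        have h1 := Finset.card_le_card hss
        rw [Finset.card_erase_of_mem hmX] at h1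
        have h2 : 1 ≤ (X \ L.toFinset).card := Finset.card_pos.mpr ⟨m, hmX⟩
        omega
      exact ih _ _ wnew hn' hsub' hcard'

end Aux2

section Aux3
set_option linter.unusedSectionVars false
set_option maxHeartbeats 1000000
variable {V E : Type} [Fintype V] [Fintype E] [DecidableEq V] [DecidableEq E]

lemma trail_split (ends : E → Sym2 V) (X : Finset E)
    (heven : ∀ w, Even (degree ends X w)) (hconn : ConnectedOn ends X)
    {x y : V} (hxy : x ≠ y) (hx : x ∈ support ends X) (hy : y ∈ support ends X) :
    ∃ (L1 L2 : List E) (vs1 vs2 : List V), WalkV ends x y L1 vs1 ∧ WalkV ends x y L2 vs2 ∧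
      L1 ≠ [] ∧ L2 ≠ [] ∧ L1.Nodup ∧ L2.Nodup ∧ Disjoint L1.toFinset L2.toFinset ∧
      L1.toFinset ∪ L2.toFinset = X := by
  obtain ⟨L, vs, hn, hLX, wk⟩ := euler_tour ends X heven hconn hx
  have hyvs : y ∈ vs := by
    rw [mem_support_iff] at hy
    obtain ⟨e, he, hm⟩ := hy
    exact wk.edge_endpoint_mem (List.mem_toFinset.mp (by rw [hLX]; exact he)) hm
  obtain ⟨L1, L2, vs1, vs2, hsplit, w1, w2, _⟩ := wk.splice_first hyvs
  subst hsplit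
  rw [List.nodup_append] at hn
  refine ⟨L1, L2.reverse, vs1, vs2.reverse, w1, w2.reverse, ?_, ?_, hn.1,
    (List.nodup_reverse).mpr hn.2.1, ?_, ?_⟩
  · rintro rfl; exact hxy w1.eq_of_nil
  · intro h
    have h2 : L2 = [] := by simpa using congrArg List.reverse h
    subst h2
    exact hxy w2.eq_of_nil.symm
  · rw [List.toFinset_reverse]
    exact Finset.disjoint_left.mpr
      (fun {t} ht ht' => hn.2.2 t (List.mem_toFinset.mp ht) t (List.mem_toFinset.mp ht') rfl)
  · rw [List.toFinset_reverse, ← List.toFinset_append]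
    exact hLX

lemma exists_two_split (ends : E → Sym2 V)
    (heven : ∀ w, Even (degree ends (Finset.univ : Finset E) w))
    (hconn : ConnectedOn ends (Finset.univ : Finset E))
    {u : V} (hu : 4 ≤ degree ends (Finset.univ : Finset E) u) :
    ∃ (L1 L2 : List E) (vs1 vs2 : List V), WalkV ends u u L1 vs1 ∧ WalkV ends u u L2 vs2 ∧
      L1 ≠ [] ∧ L2 ≠ [] ∧ L1.Nodup ∧ L2.Nodup ∧ Disjoint L1.toFinset L2.toFinset ∧
      L1.toFinset ∪ L2.toFinset = Finset.univ := by
  have husupp : u ∈ support ends (Finset.univ : Finset E) := by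
    obtain ⟨e, he, hm⟩ := exists_edge_of_degree_ne_zero ends (F := Finset.univ) (w := u) (by omega)
    exact mem_support_of_mem_edge ends he hm
  obtain ⟨L, vs, hn, hLX, wk⟩ := euler_tour ends Finset.univ heven hconn husupp
  have hnful := hn
  have hdegL : degL ends L u = degree ends (Finset.univ : Finset E) u := by
    rw [← degL_toFinset ends hn, hLX]
  have hcnt : 3 ≤ vs.count u := by
    have h := wk.degcount u
    simp at h
    omega
  obtain ⟨L1, L2, vs1, vs2, hsplit, w1, w2, hcnt1⟩ := wk.second_split (by omega)
  subst hsplit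
  rw [List.nodup_append] at hn
  have hL1 : L1 ≠ [] := by
    intro h; subst h; cases w1; simp at hcnt1
  have hL2 : L2 ≠ [] := by
    intro h
    subst h
    have h1 := w1.degcount u
    simp at h1
    rw [degL_append] at hdegL
    have hz : degL ends ([] : List E) u = 0 := by simp [degL]
    omega
  refine ⟨L1, L2, vs1, vs2, w1, w2, hL1, hL2, hn.1, hn.2.1, ?_, ?_⟩
  · exact Finset.disjoint_left.mpr
      (fun {t} ht ht' => hn.2.2 t (List.mem_toFinset.mp ht) t (List.mem_toFinset.mp ht') rfl)
  · rw [← List.toFinset_append]; exact hLX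

lemma exists_shared (ends : E → Sym2 V) (hconn : Connected ends) {X Y : Finset E}
    (hun : X ∪ Y = Finset.univ) (hX : X.Nonempty) (hY : Y.Nonempty) :
    ∃ z, z ∈ support ends X ∧ z ∈ support ends Y := by
  obtain ⟨eX, heX⟩ := hX
  obtain ⟨aX, bX, hX2⟩ := sym2_exists (ends eX)
  have haX : aX ∈ support ends X := mem_support_of_mem_edge ends heX
    (by rw [hX2]; exact Sym2.mem_mk_left _ _)
  obtain ⟨eY, heY⟩ := hY
  obtain ⟨aY, bY, hY2⟩ := sym2_exists (ends eY)
  have haY : aY ∈ support ends Y := mem_support_of_mem_edge ends heY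
    (by rw [hY2]; exact Sym2.mem_mk_left _ _)
  have hr : Reach ends Finset.univ aX aY := hconn aX aY
  have main : ∀ b, Reach ends Finset.univ aX b → b ∈ support ends Y →
      ∃ z, z ∈ support ends X ∧ z ∈ support ends Y := by
    intro b hrb
    induction hrb with
    | refl => exact fun hb => ⟨aX, haX, hb⟩
    | tail hstep hlast ihr =>
      rename_i c b'
      intro hb'
      obtain ⟨f, hf, hends⟩ := hlast
      have hfXY : f ∈ X ∪ Y := by rw [hun]; exact hf
      rcases Finset.mem_union.mp hfXY with hfX | hfY
      · exact ⟨b', mem_support_of_mem_edge ends hfX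
          (by rw [hends]; exact Sym2.mem_mk_right _ _), hb'⟩
      · exact ihr (mem_support_of_mem_edge ends hfY
          (by rw [hends]; exact Sym2.mem_mk_left _ _))
  exact main aY hr haY

lemma cut_contra (ends : E → Sym2 V) {X Y : Finset E} (hun : X ∪ Y = Finset.univ)
    {z a b : V} (ha : a ∈ support ends X) (haz : a ≠ z)
    (hb : b ∈ support ends Y) (hbz : b ≠ z)
    (hshared : ∀ w, w ∈ support ends X → w ∈ support ends Y → w = z)
    (h2c : TwoConnected ends) : False := by
  apply h2c.2 z
  have haU : a ∈ support ends (Finset.univ : Finset E) :=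
    support_mono ends (Finset.subset_univ X) ha
  have hbU : b ∈ support ends (Finset.univ : Finset E) :=
    support_mono ends (Finset.subset_univ Y) hb
  refine ⟨a, haU, b, hbU, haz, hbz, h2c.1 a b, fun hra => ?_⟩
  have inv : ∀ c, ReachAvoid ends Finset.univ z a c → c ∈ support ends X ∧ c ≠ z := by
    intro c hc
    induction hc with
    | refl => exact ⟨ha, haz⟩
    | tail hstep hlast ihr =>
      rename_i c' c''
      obtain ⟨hne1, hne2, f, hf, hends⟩ := hlast
      have hfXY : f ∈ X ∪ Y := by rw [hun]; exact hf
      rcases Finset.mem_union.mp hfXY with hfX | hfY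
      · exact ⟨mem_support_of_mem_edge ends hfX
          (by rw [hends]; exact Sym2.mem_mk_right _ _), hne2⟩
      · exact absurd (hshared c' ihr.1 (mem_support_of_mem_edge ends hfY
          (by rw [hends]; exact Sym2.mem_mk_left _ _))) ihr.2
  have hbfin := inv b hra
  exact hbfin.2 (hshared b hbfin.1 hb)

lemma mem_support_univ_of_connected (ends : E → Sym2 V) (hconn : Connected ends)
    (hne : (Finset.univ : Finset E).Nonempty) (v : V) :
    v ∈ support ends (Finset.univ : Finset E) := by
  obtain ⟨e, _⟩ := hne
  obtain ⟨a, b0, hab⟩ := sym2_exists (ends e)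
  have hr := hconn v a
  rcases Relation.ReflTransGen.cases_head hr with heq | ⟨c, hstep, _⟩
  · subst heq
    exact mem_support_of_mem_edge ends (Finset.mem_univ e)
      (by rw [hab]; exact Sym2.mem_mk_left _ _)
  · obtain ⟨f, hf, hends⟩ := hstep
    exact mem_support_of_mem_edge ends hf (by rw [hends]; exact Sym2.mem_mk_left _ _)

lemma negEdges_card_union (sgn : E → Bool) {F G : Finset E} (h : Disjoint F G) :
    (negEdges sgn (F ∪ G)).card = (negEdges sgn F).card + (negEdges sgn G).card := by
  unfold negEdges
  rw [Finset.filter_union, Finset.card_union_of_disjoint (Finset.disjoint_filter_filter h)]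

lemma even_neg_of_support_subset (ends : E → Sym2 V) (sgn : E → Bool) {X : Finset E} {z : V}
    (hsub : support ends X ⊆ {z}) (hnl : ∀ e, IsLoop ends e → sgn e = false) :
    Even (negEdges sgn X).card := by
  have hempty : negEdges sgn X = ∅ := by
    rw [Finset.eq_empty_iff_forall_notMem]
    intro e he
    rw [negEdges, Finset.mem_filter] at he
    obtain ⟨a, b0, hab⟩ := sym2_exists (ends e)
    have ha : a ∈ support ends X := mem_support_of_mem_edge ends he.1
      (by rw [hab]; exact Sym2.mem_mk_left _ _)
    have hb : b0 ∈ support ends X := mem_support_of_mem_edge ends he.1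
      (by rw [hab]; exact Sym2.mem_mk_right _ _)
    have ha' := Finset.mem_singleton.mp (hsub ha)
    have hb' := Finset.mem_singleton.mp (hsub hb)
    have hloop : IsLoop ends e := by
      rw [IsLoop, hab]
      exact Sym2.mk_isDiag_iff.mpr (ha'.trans hb'.symm)
    rw [hnl e hloop] at he
    exact Bool.false_ne_true he.2
  rw [hempty]
  simp

lemma win_builder (ends : E → Sym2 V) (sgn : E → Bool) (v : V) {x y : V}
    {A B C D : List E} {va vb vc vd : List V}
    (wA : WalkV ends x y A va) (wB : WalkV ends x y B vb)
    (wC : WalkV ends x y C vc) (wD : WalkV ends x y D vd)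
    (hAn : A.Nodup) (hBn : B.Nodup) (hCn : C.Nodup) (hDn : D.Nodup)
    (hA0 : A ≠ []) (hC0 : C ≠ [])
    (hAB : Disjoint A.toFinset B.toFinset) (hCD : Disjoint C.toFinset D.toFinset)
    (hACBD : Disjoint (A.toFinset ∪ B.toFinset) (C.toFinset ∪ D.toFinset))
    (hun : (A.toFinset ∪ B.toFinset) ∪ (C.toFinset ∪ D.toFinset) = Finset.univ)
    (hv : v ∈ support ends (A.toFinset ∪ B.toFinset))
    (hEv : Even (negEdges sgn (C.toFinset ∪ D.toFinset)).card) :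
    ∃ A₁ A₂ : Finset E, Disjoint A₁ A₂ ∧ A₁ ∪ A₂ = Finset.univ ∧
      A₁.Nonempty ∧ A₂.Nonempty ∧ IsEulerianOn ends A₁ ∧ IsEulerianOn ends A₂ ∧
      v ∈ support ends A₁ ∧ Even (negEdges sgn A₂).card := by
  refine ⟨A.toFinset ∪ B.toFinset, C.toFinset ∪ D.toFinset, hACBD, hun, ?_, ?_,
    eulerian_union ends wA wB hAn hBn hAB, eulerian_union ends wC wD hCn hDn hCD, hv, hEv⟩
  · obtain ⟨e, he⟩ := List.exists_mem_of_ne_nil A hA0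
    exact ⟨e, Finset.mem_union_left _ (List.mem_toFinset.mpr he)⟩
  · obtain ⟨e, he⟩ := List.exists_mem_of_ne_nil C hC0
    exact ⟨e, Finset.mem_union_left _ (List.mem_toFinset.mpr he)⟩

lemma four_win (ends : E → Sym2 V) (sgn : E → Bool) (v : V) {x y : V}
    {P Q R S : List E} {vp vq vr vs0 : List V}
    (wP : WalkV ends x y P vp) (wQ : WalkV ends x y Q vq)
    (wR : WalkV ends x y R vr) (wS : WalkV ends x y S vs0)
    (hPn : P.Nodup) (hQn : Q.Nodup) (hRn : R.Nodup) (hSn : S.Nodup)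
    (hP0 : P ≠ []) (hQ0 : Q ≠ []) (hR0 : R ≠ []) (hS0 : S ≠ [])
    (hPQ : Disjoint P.toFinset Q.toFinset) (hPR : Disjoint P.toFinset R.toFinset)
    (hPS : Disjoint P.toFinset S.toFinset) (hQR : Disjoint Q.toFinset R.toFinset)
    (hQS : Disjoint Q.toFinset S.toFinset) (hRS : Disjoint R.toFinset S.toFinset)
    (hun : P.toFinset ∪ Q.toFinset ∪ R.toFinset ∪ S.toFinset = Finset.univ)
    (hv : v ∈ support ends P.toFinset) :
    ∃ A₁ A₂ : Finset E, Disjoint A₁ A₂ ∧ A₁ ∪ A₂ = Finset.univ ∧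
      A₁.Nonempty ∧ A₂.Nonempty ∧ IsEulerianOn ends A₁ ∧ IsEulerianOn ends A₂ ∧
      v ∈ support ends A₁ ∧ Even (negEdges sgn A₂).card := by
  by_cases h1 : Even (negEdges sgn Q.toFinset).card ↔ Even (negEdges sgn R.toFinset).card
  · refine win_builder ends sgn v wP wS wQ wR hPn hSn hQn hRn hP0 hQ0 hPS hQR ?_ ?_ ?_ ?_
    · exact Finset.disjoint_union_left.mpr
        ⟨Finset.disjoint_union_right.mpr ⟨hPQ, hPR⟩,
         Finset.disjoint_union_right.mpr ⟨hQS.symm, hRS.symm⟩⟩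
    · rw [← hun]; ext t; simp only [Finset.mem_union]; tauto
    · rw [support_union]; exact Finset.mem_union_left _ hv
    · rw [negEdges_card_union sgn hQR]
      rcases h1 with ⟨h1a, h1b⟩
      by_cases hq : Even (negEdges sgn Q.toFinset).card
      · exact Nat.even_add.mpr (by tauto)
      · exact Nat.even_add.mpr (by tauto)
  · by_cases h2 : Even (negEdges sgn Q.toFinset).card ↔ Even (negEdges sgn S.toFinset).card
    · refine win_builder ends sgn v wP wR wQ wS hPn hRn hQn hSn hP0 hQ0 hPR hQS ?_ ?_ ?_ ?_
      · exact Finset.disjoint_union_left.mpr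
          ⟨Finset.disjoint_union_right.mpr ⟨hPQ, hPS⟩,
           Finset.disjoint_union_right.mpr ⟨hQR.symm, hRS⟩⟩
      · rw [← hun]; ext t; simp only [Finset.mem_union]; tauto
      · rw [support_union]; exact Finset.mem_union_left _ hv
      · rw [negEdges_card_union sgn hQS]
        exact Nat.even_add.mpr (by tauto)
    · have h3 : Even (negEdges sgn R.toFinset).card ↔ Even (negEdges sgn S.toFinset).card := by
        tauto
      refine win_builder ends sgn v wP wQ wR wS hPn hQn hRn hSn hP0 hR0 hPQ hRS ?_ ?_ ?_ ?_
      · exact Finset.disjoint_union_left.mpr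
          ⟨Finset.disjoint_union_right.mpr ⟨hPR, hPS⟩,
           Finset.disjoint_union_right.mpr ⟨hQR, hQS⟩⟩
      · rw [← hun]; ext t; simp only [Finset.mem_union]; tauto
      · rw [support_union]; exact Finset.mem_union_left _ hv
      · rw [negEdges_card_union sgn hRS]
        exact Nat.even_add.mpr (by tauto)

end Aux3

set_option maxHeartbeats 4000000 in
/-- A 2-connected nontrivial signed Eulerian graph without negative
loops is a circuit, or decomposes into two nontrivial Eulerian subgraphs, one
containing `v`, the other with an even number of negative edges. -/
theorem statement2 {V E : Type} [Fintype V] [Fintype E] [DecidableEq V] [DecidableEq E]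
    (ends : E → Sym2 V) (sgn : E → Bool) (v : V)
    (h2c : TwoConnected ends)
    (hnontrivial : (Finset.univ : Finset E).Nonempty)
    (heulerian : ∀ w : V, Even (degree ends (Finset.univ : Finset E) w))
    (hnonegloops : ∀ e : E, IsLoop ends e → sgn e = false) :
    IsCircuit ends (Finset.univ : Finset E) ∨
      ∃ A₁ A₂ : Finset E, Disjoint A₁ A₂ ∧ A₁ ∪ A₂ = Finset.univ ∧
        A₁.Nonempty ∧ A₂.Nonempty ∧
        IsEulerianOn ends A₁ ∧ IsEulerianOn ends A₂ ∧
        v ∈ support ends A₁ ∧ Even (negEdges sgn A₂).card := by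
  classical
  by_cases hreg : ∀ w ∈ support ends (Finset.univ : Finset E),
      degree ends (Finset.univ : Finset E) w = 2
  · exact Or.inl ⟨hnontrivial, fun u _ w _ => h2c.1 u w, hreg⟩
  · right
    have hconnOn : ConnectedOn ends (Finset.univ : Finset E) := fun u _ w _ => h2c.1 u w
    push_neg at hreg
    obtain ⟨u, huS, hune⟩ := hreg
    have hu4 : 4 ≤ degree ends (Finset.univ : Finset E) u := by
      have h1 := degree_pos_of_mem_support ends huS
      obtain ⟨k, hk⟩ := heulerian u
      omega
    obtain ⟨LX, LY, vsX, vsY, wXw, wYw, hX0, hY0, hXn, hYn, hdisjXY, hunXY⟩ :=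
      exists_two_split ends heulerian hconnOn hu4
    have hXne : LX.toFinset.Nonempty := by
      obtain ⟨e, he⟩ := List.exists_mem_of_ne_nil LX hX0
      exact ⟨e, List.mem_toFinset.mpr he⟩
    have hYne : LY.toFinset.Nonempty := by
      obtain ⟨e, he⟩ := List.exists_mem_of_ne_nil LY hY0
      exact ⟨e, List.mem_toFinset.mpr he⟩
    obtain ⟨z, hzX, hzY⟩ := exists_shared ends h2c.1 hunXY hXne hYne
    have hvU : v ∈ support ends (Finset.univ : Finset E) :=
      mem_support_univ_of_connected ends h2c.1 hnontrivial v
    have hsuppU : support ends (Finset.univ : Finset E) =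
        support ends LX.toFinset ∪ support ends LY.toFinset := by
      rw [← hunXY, support_union]
    by_cases hsec : ∃ w', w' ≠ z ∧ w' ∈ support ends LX.toFinset ∧
        w' ∈ support ends LY.toFinset
    · obtain ⟨y0, hy0z, hy0X, hy0Y⟩ := hsec
      have hXeven : ∀ w, Even (degree ends LX.toFinset w) := fun w => wXw.closed_even hXn w
      have hYeven : ∀ w, Even (degree ends LY.toFinset w) := fun w => wYw.closed_even hYn w
      have hXconn : ConnectedOn ends LX.toFinset := wXw.closed_connectedOn
      have hYconn : ConnectedOn ends LY.toFinset := wYw.closed_connectedOn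
      obtain ⟨P, Q, vp, vq, wP, wQ, hP0, hQ0, hPn, hQn, hdPQ, hunPQ⟩ :=
        trail_split ends LX.toFinset hXeven hXconn (Ne.symm hy0z) hzX hy0X
      obtain ⟨R, S, vr, vs0, wR, wS, hR0, hS0, hRn, hSn, hdRS, hunRS⟩ :=
        trail_split ends LY.toFinset hYeven hYconn (Ne.symm hy0z) hzY hy0Y
      have hsubPX : P.toFinset ⊆ LX.toFinset := by rw [← hunPQ]; exact Finset.subset_union_left
      have hsubQX : Q.toFinset ⊆ LX.toFinset := by rw [← hunPQ]; exact Finset.subset_union_right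
      have hsubRY : R.toFinset ⊆ LY.toFinset := by rw [← hunRS]; exact Finset.subset_union_left
      have hsubSY : S.toFinset ⊆ LY.toFinset := by rw [← hunRS]; exact Finset.subset_union_right
      have hPR : Disjoint P.toFinset R.toFinset :=
        Finset.disjoint_of_subset_left hsubPX (Finset.disjoint_of_subset_right hsubRY hdisjXY)
      have hPS : Disjoint P.toFinset S.toFinset :=
        Finset.disjoint_of_subset_left hsubPX (Finset.disjoint_of_subset_right hsubSY hdisjXY)
      have hQR : Disjoint Q.toFinset R.toFinset :=
        Finset.disjoint_of_subset_left hsubQX (Finset.disjoint_of_subset_right hsubRY hdisjXY)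
      have hQS : Disjoint Q.toFinset S.toFinset :=
        Finset.disjoint_of_subset_left hsubQX (Finset.disjoint_of_subset_right hsubSY hdisjXY)
      have hun4 : P.toFinset ∪ Q.toFinset ∪ R.toFinset ∪ S.toFinset = Finset.univ := by
        rw [Finset.union_assoc, hunRS, hunPQ, hunXY]
      have hv4 : v ∈ support ends P.toFinset ∨ v ∈ support ends Q.toFinset ∨
          v ∈ support ends R.toFinset ∨ v ∈ support ends S.toFinset := by
        rw [hsuppU, ← hunPQ, ← hunRS, support_union, support_union] at hvU
        simp only [Finset.mem_union] at hvU
        tauto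
      rcases hv4 with hv | hv | hv | hv
      · exact four_win ends sgn v wP wQ wR wS hPn hQn hRn hSn hP0 hQ0 hR0 hS0
          hdPQ hPR hPS hQR hQS hdRS hun4 hv
      · refine four_win ends sgn v wQ wP wR wS hQn hPn hRn hSn hQ0 hP0 hR0 hS0
          hdPQ.symm hQR hQS hPR hPS hdRS ?_ hv
        rw [← hun4]; ext t; simp only [Finset.mem_union]; tauto
      · refine four_win ends sgn v wR wS wP wQ hRn hSn hPn hQn hR0 hS0 hP0 hQ0
          hdRS hPR.symm hQR.symm hPS.symm hQS.symm hdPQ ?_ hv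
        rw [← hun4]; ext t; simp only [Finset.mem_union]; tauto
      · refine four_win ends sgn v wS wR wP wQ hSn hRn hPn hQn hS0 hR0 hP0 hQ0
          hdRS.symm hPS.symm hQS.symm hPR.symm hQR.symm hdPQ ?_ hv
        rw [← hun4]; ext t; simp only [Finset.mem_union]; tauto
    · have hsh : ∀ w', w' ∈ support ends LX.toFinset → w' ∈ support ends LY.toFinset →
          w' = z := by
        intro w' h1 h2
        by_contra hne
        exact hsec ⟨w', hne, h1, h2⟩
      have hXeul : IsEulerianOn ends LX.toFinset :=
        ⟨wXw.closed_connectedOn, fun w _ => wXw.closed_even hXn w⟩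
      have hYeul : IsEulerianOn ends LY.toFinset :=
        ⟨wYw.closed_connectedOn, fun w _ => wYw.closed_even hYn w⟩
      by_cases hXz : support ends LX.toFinset ⊆ {z}
      · refine ⟨LY.toFinset, LX.toFinset, hdisjXY.symm,
          by rw [Finset.union_comm]; exact hunXY, hYne, hXne, hYeul, hXeul, ?_,
          even_neg_of_support_subset ends sgn hXz hnonegloops⟩
        rw [hsuppU] at hvU
        rcases Finset.mem_union.mp hvU with hv | hv
        · have := Finset.mem_singleton.mp (hXz hv)
          subst this
          exact hzY
        · exact hv
      · by_cases hYz : support ends LY.toFinset ⊆ {z}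
        · refine ⟨LX.toFinset, LY.toFinset, hdisjXY, hunXY, hXne, hYne, hXeul, hYeul, ?_,
            even_neg_of_support_subset ends sgn hYz hnonegloops⟩
          rw [hsuppU] at hvU
          rcases Finset.mem_union.mp hvU with hv | hv
          · exact hv
          · have := Finset.mem_singleton.mp (hYz hv)
            subst this
            exact hzX
        · exfalso
          obtain ⟨a, haX, haz⟩ := Finset.not_subset.mp hXz
          obtain ⟨b, hbY, hbz⟩ := Finset.not_subset.mp hYz
          exact cut_contra ends hunXY haX (fun h => haz (Finset.mem_singleton.mpr h))
            hbY (fun h => hbz (Finset.mem_singleton.mpr h)) hsh h2c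

end SignedCircuitCover
end
end

section
/- A signed graph in which exactly one edge is negative in a minimum signature, and in which some edge lies in no balanced circuit and no barbell, is not flow-admissible. In particular, a connected signed graph whose minimum signature has exactly one negative edge is not flow-admissible. -/
open Finset
open scoped Classical

noncomputable section

namespace SignedCircuitCover

variable {V E : Type} [Fintype V] [Fintype E] [DecidableEq V] [DecidableEq E]

/-- A signed graph with exactly one negative edge in a minimum
signature in which some edge lies in no signed circuit is not flow-admissible;
in particular, a connected signed graph whose minimum signature has exactly one
negative edge is not flow-admissible. -/
theorem statement9 {V E : Type} [Fintype V] [Fintype E] [DecidableEq V] [DecidableEq E]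
    (ends : E → Sym2 V) (sgn : E → Bool)
    (hmin : IsMinSignature ends sgn)
    (hone : negCount sgn = 1) :
    ((∃ e : E, ∀ C : Finset E, IsSignedCircuit ends sgn C → e ∉ C) →
      ¬ FlowAdmissible ends sgn) ∧
    (Connected ends → ¬ FlowAdmissible ends sgn) := by
  -- Extract the unique negative edge e₀.
  obtain ⟨e₀, he₀⟩ := Finset.card_eq_one.mp hone
  have hneg : ∀ e : E, sgn e = true ↔ e = e₀ := by
    intro e
    constructor
    · intro h
      have : e ∈ (Finset.univ.filter fun e => sgn e = true) := by
        simp [h]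
      rw [he₀] at this; simpa using this
    · intro h
      have : e₀ ∈ (Finset.univ.filter fun e' => sgn e' = true) := by
        rw [he₀]; exact Finset.mem_singleton_self e₀
      simp only [Finset.mem_filter] at this
      rw [h]; exact this.2
  have hsub : ∀ F : Finset E, negEdges sgn F ⊆ {e₀} := by
    intro F e he
    simp only [negEdges, Finset.mem_filter] at he
    simp [(hneg e).mp he.2]
  -- No barbell exists.
  have hnobarbell : ∀ F : Finset E, ¬ IsBarbell ends sgn F := by
    intro F hF
    have key : ∀ C₁ C₂ : Finset E, Disjoint C₁ C₂ →
        IsUnbalancedCircuit ends sgn C₁ → IsUnbalancedCircuit ends sgn C₂ → False := by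
      intro C₁ C₂ hdisj h1 h2
      obtain ⟨n₁, hn₁⟩ := Finset.card_pos.mp h1.2.pos
      obtain ⟨n₂, hn₂⟩ := Finset.card_pos.mp h2.2.pos
      have hm₁ : n₁ ∈ ({e₀} : Finset E) := hsub C₁ hn₁
      have hm₂ : n₂ ∈ ({e₀} : Finset E) := hsub C₂ hn₂
      have e1 : n₁ = e₀ := Finset.mem_singleton.mp hm₁
      have e2 : n₂ = e₀ := Finset.mem_singleton.mp hm₂
      have hin1 : e₀ ∈ C₁ := by
        have := hn₁; rw [e1] at this
        exact (Finset.mem_filter.mp this).1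
      have hin2 : e₀ ∈ C₂ := by
        have := hn₂; rw [e2] at this
        exact (Finset.mem_filter.mp this).1
      exact (Finset.disjoint_left.mp hdisj hin1) hin2
    rcases hF with ⟨C₁, C₂, hdisj, _, h1, h2, _⟩ | ⟨C₁, C₂, P, u, v, hdisj, _, _, _, h1, h2, _⟩
    · exact key C₁ C₂ hdisj h1 h2
    · exact key C₁ C₂ hdisj h1 h2
  -- e₀ lies in no signed circuit.
  have hkey : ∀ C : Finset E, IsSignedCircuit ends sgn C → e₀ ∉ C := by
    intro C hC hmem
    rcases hC with hbal | hbarb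
    · -- balanced circuit containing e₀ : negEdges = {e₀}, card 1, not even.
      have hin : e₀ ∈ negEdges sgn C := by
        simp [negEdges, hmem, (hneg e₀).mpr rfl]
      have heq : negEdges sgn C = {e₀} :=
        Finset.Subset.antisymm (hsub C) (Finset.singleton_subset_iff.mpr hin)
      have := hbal.2
      rw [heq] at this
      simp at this
    · exact hnobarbell C hbarb
  have hnf : ¬ FlowAdmissible ends sgn := by
    intro hFA
    obtain ⟨C, hC, hmem⟩ := hFA e₀
    exact hkey C hC hmem
  exact ⟨fun _ => hnf, fun _ => hnf⟩

end SignedCircuitCover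
end
end
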